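/- arXiv:2010.09649 — 6 statements merged into one kernel-verified Lean document; each statement's English description precedes it below -/
import Mathlib

section
/- For every positive semidefinite matrix A ∈ ℝ^{d×d} and every integer k ≥ 1, there exists a matrix B ∈ ℝ^{d×d} with rank(B) ≤ k such that ‖A − B‖_F ≤ tr(A)/√k. -/
open MeasureTheory Matrix

/-- The Frobenius norm of a real matrix. -/
noncomputable def frobNorm {m n : ℕ} (M : Matrix (Fin m) (Fin n) ℝ) : ℝ :=
  Real.sqrt (∑ i, ∑ j, (M i j) ^ 2)

lemma frobNorm_conj {d : ℕ} (U : Matrix.unitaryGroup (Fin d) ℝ) (w : Fin d → ℝ) :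
    frobNorm ((U : Matrix (Fin d) (Fin d) ℝ) * Matrix.diagonal w *
      star (U : Matrix (Fin d) (Fin d) ℝ)) = Real.sqrt (∑ i, w i ^ 2) := by
  set M : Matrix (Fin d) (Fin d) ℝ :=
    (U : Matrix (Fin d) (Fin d) ℝ) * Matrix.diagonal w * star (U : Matrix (Fin d) (Fin d) ℝ)
  have hsum : ∑ i, ∑ j, (M i j) ^ 2 = (Mᵀ * M).trace := by
    simp only [Matrix.trace, Matrix.diag, Matrix.mul_apply, Matrix.transpose_apply, ← pow_two]
    rw [Finset.sum_comm]
  have hMT : Mᵀ = M := by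
    have h1 : Mᵀ = Mᴴ := by
      ext i j
      simp [Matrix.conjTranspose_apply]
    rw [h1]
    simp only [M]
    rw [show (star (U : Matrix (Fin d) (Fin d) ℝ)) = (U : Matrix (Fin d) (Fin d) ℝ)ᴴ from rfl,
      Matrix.conjTranspose_mul, Matrix.conjTranspose_mul, Matrix.conjTranspose_conjTranspose,
      Matrix.diagonal_conjTranspose]
    simp [Matrix.mul_assoc, star_trivial]
  have hUU : star (U : Matrix (Fin d) (Fin d) ℝ) * (U : Matrix (Fin d) (Fin d) ℝ) = 1 :=
    Unitary.coe_star_mul_self U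
  have : Mᵀ * M = (U : Matrix (Fin d) (Fin d) ℝ) * Matrix.diagonal (fun i => w i ^ 2) *
      star (U : Matrix (Fin d) (Fin d) ℝ) := by
    rw [hMT]
    simp only [M, Matrix.mul_assoc]
    rw [← Matrix.mul_assoc (star (U : Matrix (Fin d) (Fin d) ℝ)) (U : Matrix (Fin d) (Fin d) ℝ),
      hUU, Matrix.one_mul, ← Matrix.mul_assoc (Matrix.diagonal w), Matrix.diagonal_mul_diagonal]
    congr 1
    ext i
    ring
  rw [frobNorm, hsum, this, Matrix.trace_mul_cycle, hUU, Matrix.one_mul,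
    Matrix.trace_diagonal]

theorem stmt0 (d : ℕ) (A : Matrix (Fin d) (Fin d) ℝ) (hA : A.PosSemidef)
    (k : ℕ) (hk : 1 ≤ k) :
    ∃ B : Matrix (Fin d) (Fin d) ℝ, B.rank ≤ k ∧
      frobNorm (A - B) ≤ A.trace / Real.sqrt k := by
  classical
  have hH := hA.1
  set U := hH.eigenvectorUnitary with hU
  set lam := hH.eigenvalues with hlam
  have hspec : A = (U : Matrix (Fin d) (Fin d) ℝ) * Matrix.diagonal lam *
      star (U : Matrix (Fin d) (Fin d) ℝ) := by
    have := hH.spectral_theorem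
    simpa [RCLike.ofReal_real_eq_id] using this
  have hUU : star (U : Matrix (Fin d) (Fin d) ℝ) * (U : Matrix (Fin d) (Fin d) ℝ) = 1 :=
    Unitary.coe_star_mul_self U
  have hlam_nonneg : ∀ i, 0 ≤ lam i := fun i => hA.eigenvalues_nonneg i
  have htr : A.trace = ∑ i, lam i := by
    rw [hspec, Matrix.trace_mul_cycle, hUU, Matrix.one_mul, Matrix.trace_diagonal]
  have htr_nonneg : 0 ≤ A.trace := by
    rw [htr]; exact Finset.sum_nonneg fun i _ => hlam_nonneg i
  set t : ℝ := A.trace / k with ht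
  have hk0 : (0:ℝ) < k := by exact_mod_cast hk
  have ht_nonneg : 0 ≤ t := div_nonneg htr_nonneg hk0.le
  set ν : Fin d → ℝ := fun i => if t < lam i then lam i else 0 with hν
  set μ : Fin d → ℝ := fun i => if t < lam i then 0 else lam i with hμ
  refine ⟨(U : Matrix (Fin d) (Fin d) ℝ) * Matrix.diagonal ν *
      star (U : Matrix (Fin d) (Fin d) ℝ), ?_, ?_⟩
  · -- rank bound
    refine le_trans (le_trans (Matrix.rank_mul_le_left _ _) (Matrix.rank_mul_le_right _ _)) ?_
    rw [Matrix.rank_diagonal]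
    -- card of {i // ν i ≠ 0} ≤ k
    have hsub : ∀ i, ν i ≠ 0 → t < lam i := by
      intro i hi
      by_contra h
      simp [hν, h] at hi
    set S : Finset (Fin d) := Finset.univ.filter (fun i => ν i ≠ 0) with hS
    have hcard : Fintype.card {i // ν i ≠ 0} = S.card := by
      rw [Fintype.card_subtype]
    rw [hcard]
    by_contra hcon
    push_neg at hcon
    have hk1 : (k : ℝ) < S.card := by exact_mod_cast hcon
    have hsumS : ∑ i ∈ S, lam i ≤ A.trace := by
      rw [htr]
      exact Finset.sum_le_sum_of_subset_of_nonneg (Finset.subset_univ S)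
        (fun i _ _ => hlam_nonneg i)
    have hge : (S.card : ℝ) * t ≤ ∑ i ∈ S, lam i := by
      calc (S.card : ℝ) * t = ∑ _i ∈ S, t := by rw [Finset.sum_const, nsmul_eq_mul]
      _ ≤ ∑ i ∈ S, lam i := Finset.sum_le_sum fun i hi => by
          have := hsub i (Finset.mem_filter.mp hi).2
          linarith
    have htrpos : 0 < A.trace := by
      rcases lt_or_eq_of_le htr_nonneg with h | h
      · exact h
      · exfalso
        have hall : ∀ i, lam i = 0 := by
          intro i
          have := Finset.sum_eq_zero_iff_of_nonneg (fun i _ => hlam_nonneg i) |>.mp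
            (by rw [← htr, ← h])
          exact this i (Finset.mem_univ i)
        have : S = ∅ := by
          apply Finset.eq_empty_of_forall_notMem
          intro i hi
          have h1 := hsub i (Finset.mem_filter.mp hi).2
          rw [hall i] at h1
          have : t = -A.trace / k := by rw [ht, ← h]; ring
          nlinarith [h1]
        rw [this, Finset.card_empty] at hcon
        omega
    have htpos : 0 < t := div_pos htrpos hk0
    have htk : t * k = A.trace := by rw [ht]; field_simp
    nlinarith [htk, htpos, hk1, hge, hsumS]
  · -- norm bound
    have hAB : A - (U : Matrix (Fin d) (Fin d) ℝ) * Matrix.diagonal ν *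
        star (U : Matrix (Fin d) (Fin d) ℝ) =
        (U : Matrix (Fin d) (Fin d) ℝ) * Matrix.diagonal μ *
        star (U : Matrix (Fin d) (Fin d) ℝ) := by
      rw [hspec]
      rw [← Matrix.sub_mul, ← Matrix.mul_sub]
      have hd : Matrix.diagonal lam - Matrix.diagonal ν = Matrix.diagonal μ := by
        ext i j
        by_cases hij : i = j
        · subst hij
          by_cases h : t < lam i <;> simp [Matrix.diagonal_apply_eq, hν, hμ, h]
        · simp [Matrix.diagonal_apply_ne _ hij]
      rw [hd]
    rw [hAB, frobNorm_conj]
    have hbound : ∑ i, μ i ^ 2 ≤ A.trace ^ 2 / k := by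
      have h1 : ∀ i, μ i ^ 2 ≤ t * lam i := by
        intro i
        by_cases h : t < lam i
        · simp only [hμ, if_pos h]
          simpa using mul_nonneg ht_nonneg (hlam_nonneg i)
        · simp only [hμ, if_neg h]
          push_neg at h
          nlinarith [hlam_nonneg i]
      calc ∑ i, μ i ^ 2 ≤ ∑ i, t * lam i := Finset.sum_le_sum fun i _ => h1 i
      _ = t * A.trace := by rw [← Finset.mul_sum, htr]
      _ = A.trace ^ 2 / k := by rw [ht]; ring
    calc Real.sqrt (∑ i, μ i ^ 2) ≤ Real.sqrt (A.trace ^ 2 / k) := Real.sqrt_le_sqrt hbound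
    _ = A.trace / Real.sqrt k := by
        rw [Real.sqrt_div (by positivity), Real.sqrt_sq htr_nonneg]
end

section
/- Let d and k be integers with 1 ≤ k ≤ d, and let λ₁ ≥ λ₂ ≥ … ≥ λ_d ≥ 0 be real numbers. Then Σ_{i=k+1}^{d} λᵢ² ≤ (1/k)·(Σ_{i=1}^{d} λᵢ)². -/
theorem stmt1 (d k : ℕ) (hk : 1 ≤ k) (hkd : k ≤ d) (lam : Fin d → ℝ)
    (hnonneg : ∀ i, 0 ≤ lam i) (hmono : Antitone lam) :
    ∑ i ∈ Finset.univ.filter (fun i : Fin d => k ≤ (i : ℕ)), (lam i) ^ 2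
      ≤ (1 / (k : ℝ)) * (∑ i, lam i) ^ 2 := by
  have hk0 : (0:ℝ) < k := by exact_mod_cast hk
  set S := ∑ i, lam i with hS
  have hS0 : 0 ≤ S := Finset.sum_nonneg fun i _ => hnonneg i
  have hcard : (Finset.univ.filter (fun j : Fin d => (j:ℕ) < k)).card = k := by
    have h : ∀ m ∈ Finset.range k, m < d := fun m hm =>
      lt_of_lt_of_le (Finset.mem_range.mp hm) hkd
    have heq : Finset.univ.filter (fun j : Fin d => (j:ℕ) < k)
        = (Finset.range k).attachFin h := by
      ext j
      simp [Finset.mem_attachFin]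
    rw [heq, Finset.card_attachFin, Finset.card_range]
  have key : ∀ i : Fin d, k ≤ (i:ℕ) → (k:ℝ) * lam i ≤ S := by
    intro i hi
    have h1 : (k:ℝ) * lam i
        = ∑ _j ∈ Finset.univ.filter (fun j : Fin d => (j:ℕ) < k), lam i := by
      rw [Finset.sum_const, hcard, nsmul_eq_mul]
    rw [h1]
    calc ∑ _j ∈ Finset.univ.filter (fun j : Fin d => (j:ℕ) < k), lam i
        ≤ ∑ j ∈ Finset.univ.filter (fun j : Fin d => (j:ℕ) < k), lam j := by
          apply Finset.sum_le_sum
          intro j hj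
          simp only [Finset.mem_filter] at hj
          exact hmono (by
            have : (j:ℕ) ≤ (i:ℕ) := le_trans (le_of_lt hj.2) hi
            exact Fin.le_def.mpr this)
      _ ≤ S := Finset.sum_le_sum_of_subset_of_nonneg (Finset.filter_subset _ _)
          fun i _ _ => hnonneg i
  have step1 : ∀ i ∈ Finset.univ.filter (fun i : Fin d => k ≤ (i:ℕ)),
      lam i ^ 2 ≤ (S / k) * lam i := by
    intro i hi
    simp only [Finset.mem_filter] at hi
    have h1 := key i hi.2
    have h2 : lam i ≤ S / k := by
      rw [le_div_iff₀ hk0]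
      linarith [mul_comm (lam i) (k:ℝ)]
    have h3 := hnonneg i
    nlinarith
  calc ∑ i ∈ Finset.univ.filter (fun i : Fin d => k ≤ (i:ℕ)), lam i ^ 2
      ≤ ∑ i ∈ Finset.univ.filter (fun i : Fin d => k ≤ (i:ℕ)), (S / k) * lam i :=
        Finset.sum_le_sum step1
    _ = (S / k) * ∑ i ∈ Finset.univ.filter (fun i : Fin d => k ≤ (i:ℕ)), lam i := by
        rw [Finset.mul_sum]
    _ ≤ (S / k) * S := by
        apply mul_le_mul_of_nonneg_left _ (div_nonneg hS0 hk0.le)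
        exact Finset.sum_le_sum_of_subset_of_nonneg (Finset.filter_subset _ _)
          fun i _ _ => hnonneg i
    _ = (1 / (k:ℝ)) * S ^ 2 := by ring
end

section
/- For every positive semidefinite matrix A ∈ ℝ^{d×d} and every integer k ≥ 1, there exists a matrix B ∈ ℝ^{d×d} with rank(B) ≤ k such that ‖A − B‖_F ≤ tr(A)/(2√k). -/
/-!
Diagonalize `A = U diag(λ) Uᵀ` with `λ ≥ 0` and let `B` keep the `min k d` largest eigenvalues. Writing
`s` for the sum of the kept eigenvalues and `t` for the sum of the discarded ones, each discarded
eigenvalue is at most `s / k`, so `‖A - B‖_F² = ∑_{discarded} λᵢ² ≤ s t / k ≤ (s + t)² / (4k)`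
by AM-GM, and `s + t = tr A`.
-/

open MeasureTheory Matrix

open Finset

theorem Finset.exists_card_eq_forall_le {ι β : Type*} [Fintype ι] [LinearOrder β] (f : ι → β)
    {k : ℕ} (hk : k ≤ Fintype.card ι) :
    ∃ S : Finset ι, #S = k ∧ ∀ i ∉ S, ∀ j ∈ S, f i ≤ f j := by
  classical
  induction k with
  | zero => exact ⟨∅, by simp⟩
  | succ k ih =>
    obtain ⟨S, hcard, hS⟩ := ih (by omega)
    obtain ⟨m, hm, hmax⟩ := Sᶜ.exists_max_image f (by rw [← card_pos, card_compl]; omega)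
    rw [mem_compl] at hm
    refine ⟨insert m S, by rw [card_insert_of_notMem hm, hcard], fun i hi j hj => ?_⟩
    rw [mem_insert, not_or] at hi
    obtain rfl | hj := mem_insert.mp hj
    · exact hmax i (mem_compl.mpr hi.2)
    · exact hS i hi.2 j hj

theorem Finset.card_mul_sum_sq_le_sum_mul_sum {ι : Type*} {f : ι → ℝ} {S T : Finset ι}
    (hf : ∀ i ∈ T, 0 ≤ f i) (hle : ∀ i ∈ T, ∀ j ∈ S, f i ≤ f j) :
    #S * ∑ i ∈ T, f i ^ 2 ≤ (∑ j ∈ S, f j) * ∑ i ∈ T, f i := by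
  rw [mul_sum, mul_sum]
  refine sum_le_sum fun i hi => ?_
  have hcard : #S * f i ≤ ∑ j ∈ S, f j := by simpa using sum_le_sum (hle i hi)
  nlinarith [hf i hi]

theorem Finset.sum_sq_compl_le_sq_sum_div {ι : Type*} [Fintype ι] [DecidableEq ι] {f : ι → ℝ}
    {S : Finset ι} {k : ℕ} (hf : ∀ i, 0 ≤ f i) (hle : ∀ i ∉ S, ∀ j ∈ S, f i ≤ f j) (hk : 0 < k)
    (hcard : #S = min k (Fintype.card ι)) :
    ∑ i ∈ Sᶜ, f i ^ 2 ≤ (∑ i, f i) ^ 2 / (4 * k) := by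
  obtain hSc | ⟨i, hi⟩ := Sᶜ.eq_empty_or_nonempty
  · rw [hSc, sum_empty]
    positivity
  have hSk : #S = k := by
    have := card_lt_univ_of_notMem (mem_compl.mp hi)
    omega
  have key := card_mul_sum_sq_le_sum_mul_sum (S := S) (T := Sᶜ) (fun i _ => hf i)
    fun i hi => hle i (mem_compl.mp hi)
  rw [hSk] at key
  rw [← sum_add_sum_compl S, le_div_iff₀ (by positivity)]
  nlinarith [sq_nonneg (∑ j ∈ S, f j - ∑ i ∈ Sᶜ, f i)]

lemma frobNorm_eq_sqrt_trace {m n : ℕ} (M : Matrix (Fin m) (Fin n) ℝ) :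
    frobNorm M = √(Mᴴ * M).trace := by
  rw [frobNorm, trace, sum_comm]
  simp [mul_apply, sq]

lemma frobNorm_conjStarAlgAut {d : ℕ} (U : unitaryGroup (Fin d) ℝ)
    (M : Matrix (Fin d) (Fin d) ℝ) :
    frobNorm (Unitary.conjStarAlgAut ℝ _ U M) = frobNorm M := by
  rw [frobNorm_eq_sqrt_trace, frobNorm_eq_sqrt_trace, ← star_eq_conjTranspose, ← map_star,
    ← map_mul, Unitary.conjStarAlgAut_apply, trace_mul_cycle, Unitary.coe_star_mul_self, one_mul,
    star_eq_conjTranspose]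

lemma frobNorm_diagonal {d : ℕ} (w : Fin d → ℝ) : frobNorm (diagonal w) = √(∑ i, w i ^ 2) := by
  simp [frobNorm, diagonal_apply]

namespace Matrix.IsHermitian

variable {n : Type*} [Fintype n] [DecidableEq n] {A : Matrix n n ℝ} (hA : A.IsHermitian)

noncomputable def eigenTruncation (S : Finset n) : Matrix n n ℝ :=
  Unitary.conjStarAlgAut ℝ _ hA.eigenvectorUnitary
    (diagonal fun i => if i ∈ S then hA.eigenvalues i else 0)

lemma rank_eigenTruncation_le (S : Finset n) : (hA.eigenTruncation S).rank ≤ #S := by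
  rw [eigenTruncation, Unitary.conjStarAlgAut_apply, ← Unitary.coe_star,
    rank_mul_eq_left_of_isUnit_det _ _ (UnitaryGroup.det_isUnit _),
    rank_mul_eq_right_of_isUnit_det _ _ (UnitaryGroup.det_isUnit _), rank_diagonal]
  refine (Fintype.card_subtype_mono _ _ fun i hi => ?_).trans (Fintype.card_coe S).le
  by_contra hiS
  exact hi (if_neg hiS)

lemma sub_eigenTruncation (S : Finset n) : A - hA.eigenTruncation S = hA.eigenTruncation Sᶜ := by
  rw [eigenTruncation, eigenTruncation]
  nth_rw 1 [hA.spectral_theorem]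
  rw [← map_sub, diagonal_sub]
  congr 2
  ext i
  by_cases hi : i ∈ S <;> simp [hi]

end Matrix.IsHermitian

lemma frobNorm_eigenTruncation {d : ℕ} {A : Matrix (Fin d) (Fin d) ℝ} (hA : A.IsHermitian)
    (S : Finset (Fin d)) :
    frobNorm (hA.eigenTruncation S) = √(∑ i ∈ S, hA.eigenvalues i ^ 2) := by
  rw [IsHermitian.eigenTruncation, frobNorm_conjStarAlgAut, frobNorm_diagonal]
  simp [ite_pow, sum_ite_mem]

theorem stmt2 (d : ℕ) (A : Matrix (Fin d) (Fin d) ℝ) (hA : A.PosSemidef)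
    (k : ℕ) (hk : 1 ≤ k) :
    ∃ B : Matrix (Fin d) (Fin d) ℝ, B.rank ≤ k ∧
      frobNorm (A - B) ≤ A.trace / (2 * Real.sqrt k) := by
  obtain ⟨S, hcard, htop⟩ := exists_card_eq_forall_le hA.1.eigenvalues (min_le_right k _)
  refine ⟨hA.1.eigenTruncation S,
    (hA.1.rank_eigenTruncation_le S).trans (hcard.trans_le (min_le_left _ _)), ?_⟩
  have htail := sum_sq_compl_le_sq_sum_div hA.eigenvalues_nonneg htop hk hcard
  have htrace : A.trace = ∑ i, hA.1.eigenvalues i := hA.1.trace_eq_sum_eigenvalues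
  rw [hA.1.sub_eigenTruncation, frobNorm_eigenTruncation, Real.sqrt_le_iff]
  refine ⟨div_nonneg hA.trace_nonneg (by positivity), ?_⟩
  rw [div_pow, mul_pow, Real.sq_sqrt k.cast_nonneg, htrace]
  norm_num [htail]
end

section
/- There exist absolute constants c, C > 0 with the following property. For every d ≥ 1, every matrix A ∈ ℝ^{d×d}, every δ ∈ (0, 1/2], and every integer ℓ ≥ c·log(1/δ), the Hutchinson estimator H_ℓ(A) satisfies |H_ℓ(A) − tr(A)| ≤ C·√(log(1/δ)/ℓ)·‖A‖_F with probability at least 1 − δ. -/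
open MeasureTheory Matrix

/-- The Rademacher distribution on `ℝ`: uniform on `{-1, +1}`. -/
noncomputable def rademacher : Measure ℝ :=
  ((1 : ENNReal) / 2) • Measure.dirac (-1) + ((1 : ENNReal) / 2) • Measure.dirac 1

instance : IsProbabilityMeasure rademacher := by
  constructor
  simp [rademacher]
  exact ENNReal.inv_two_add_inv_two

/-- The law of a `d × n` random matrix with i.i.d. Rademacher entries
(as a product measure on `Fin d → Fin n → ℝ`). -/
noncomputable def radMeasure (d n : ℕ) : Measure (Fin d → Fin n → ℝ) :=
  Measure.pi fun _ => Measure.pi fun _ => rademacher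

/-- Hutchinson's estimator with `n` queries, evaluated at the query matrix `g`. -/
noncomputable def hutch {d n : ℕ} (A : Matrix (Fin d) (Fin d) ℝ)
    (g : Fin d → Fin n → ℝ) : ℝ :=
  (1 / (n : ℝ)) * ((Matrix.of g)ᵀ * A * Matrix.of g).trace

/-!
Each column `x` of the Rademacher matrix contributes a centred chaos `xᵀ A x - tr A`, and
`H_ℓ(A) - tr A` is the average of these `ℓ` independent chaoses. The exponential moment of one
chaos is bounded by induction on the dimension: averaging over the first sign and using
`cosh a ≤ exp (a² / 2)` turns `M` into a matrix on the remaining coordinates whose trace grows by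
`|c|² / 2`, where `c` collects the coefficients of the first sign, while its off-diagonal mass
`∑_{i ≠ j} M i j ²` drops by at least `|c|² / 4`, as long as that mass is at most `1 / 64`. This
gives `E exp (xᵀ M x - tr M) ≤ exp (2 ∑_{i ≠ j} M i j ²)`, and the Chernoff bound with parameter
`√(ℓ log (1 / δ)) / ‖A‖_F` makes each of the two tails at most `δ²`. The Rademacher matrix is
uniform on the `2 ^ (d ℓ)` sign matrices, so all probabilities are computed by counting them.
-/

open Finset Real

namespace Hutchinson

noncomputable def boolSign (b : Bool) : ℝ := if b then 1 else -1

@[simp] lemma boolSign_true : boolSign true = 1 := rfl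

@[simp] lemma boolSign_false : boolSign false = -1 := rfl

lemma boolSign_injective : Function.Injective boolSign := by
  intro a b h
  cases a <;> cases b <;> first | rfl | norm_num at h

noncomputable def signMatrix {d l : ℕ} (v : Fin d → Fin l → Bool) : Fin d → Fin l → ℝ :=
  fun i k => boolSign (v i k)

lemma signMatrix_injective {d l : ℕ} : Function.Injective (signMatrix (d := d) (l := l)) :=
  fun _ _ h => funext fun i => funext fun k => boolSign_injective (congr_fun (congr_fun h i) k)

section OffDiag

variable {ι : Type*} [Fintype ι] [DecidableEq ι]

noncomputable def offDiagSq (M : Matrix ι ι ℝ) : ℝ := ∑ i, ∑ j, if i = j then 0 else M i j ^ 2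

lemma offDiagSq_nonneg (M : Matrix ι ι ℝ) : 0 ≤ offDiagSq M :=
  sum_nonneg fun _ _ => sum_nonneg fun _ _ => by split <;> positivity

lemma offDiagSq_le_sum_sq (M : Matrix ι ι ℝ) : offDiagSq M ≤ ∑ i, ∑ j, M i j ^ 2 :=
  sum_le_sum fun _ _ => sum_le_sum fun _ _ => by split_ifs <;> simp [sq_nonneg]

lemma offDiagSq_smul (r : ℝ) (M : Matrix ι ι ℝ) : offDiagSq (r • M) = r ^ 2 * offDiagSq M := by
  simp only [offDiagSq, mul_sum]
  refine sum_congr rfl fun i _ => sum_congr rfl fun j _ => ?_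
  split <;> simp [mul_pow]

lemma offDiagSq_eq_sum_sq (M : Matrix ι ι ℝ) :
    offDiagSq M = ∑ p : ι × ι, (if p.1 = p.2 then 0 else M p.1 p.2) ^ 2 := by
  rw [Fintype.sum_prod_type]
  refine sum_congr rfl fun i _ => sum_congr rfl fun j _ => ?_
  split <;> simp

lemma offDiagSq_add_le (M N : Matrix ι ι ℝ) :
    offDiagSq (M + N) ≤ (√(offDiagSq M) + √(offDiagSq N)) ^ 2 := by
  set f : ι × ι → ℝ := fun p => if p.1 = p.2 then 0 else M p.1 p.2
  set g : ι × ι → ℝ := fun p => if p.1 = p.2 then 0 else N p.1 p.2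
  have hfg : offDiagSq (M + N) = ∑ p, f p ^ 2 + 2 * ∑ p, f p * g p + ∑ p, g p ^ 2 := by
    rw [offDiagSq_eq_sum_sq, mul_sum, ← sum_add_distrib, ← sum_add_distrib]
    refine sum_congr rfl fun p _ => ?_
    simp only [f, g, Matrix.add_apply]
    split <;> ring
  have hcs := sum_mul_le_sqrt_mul_sqrt univ f g
  rw [hfg, add_sq, sq_sqrt (offDiagSq_nonneg M), sq_sqrt (offDiagSq_nonneg N),
    offDiagSq_eq_sum_sq M, offDiagSq_eq_sum_sq N]
  nlinarith

end OffDiag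

lemma exp_add_exp_neg_le (a : ℝ) : exp a + exp (-a) ≤ 2 * exp (a ^ 2 / 2) := by
  have := cosh_le_exp_half_sq a
  rw [cosh_eq] at this
  linarith

section Peel

variable {n : ℕ}

def firstCross (M : Matrix (Fin (n + 1)) (Fin (n + 1)) ℝ) : Fin n → ℝ :=
  fun j => M 0 j.succ + M j.succ 0

lemma dotProduct_mulVec_cons (M : Matrix (Fin (n + 1)) (Fin (n + 1)) ℝ) (s : ℝ)
    (x : Fin n → ℝ) :
    Fin.cons s x ⬝ᵥ M *ᵥ Fin.cons s x = M 0 0 * s ^ 2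
      + s * (firstCross M ⬝ᵥ x) + x ⬝ᵥ M.submatrix Fin.succ Fin.succ *ᵥ x := by
  simp only [firstCross, dotProduct, mulVec, Fin.sum_univ_succ, Fin.cons_zero, Fin.cons_succ,
    submatrix_apply, mul_add, add_mul, sum_add_distrib, mul_sum]
  simp only [mul_comm, mul_left_comm]
  ring

/-- Averaging over the first sign and bounding `cosh a ≤ exp (a² / 2)` replaces the quadratic form
of `M` by that of `peel M` on the remaining coordinates, see `sum_exp_quadForm_succ_le`. -/
noncomputable def peel (M : Matrix (Fin (n + 1)) (Fin (n + 1)) ℝ) : Matrix (Fin n) (Fin n) ℝ :=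
  M.submatrix Fin.succ Fin.succ + (1 / 2 : ℝ) • vecMulVec (firstCross M) (firstCross M)

lemma dotProduct_peel_mulVec (M : Matrix (Fin (n + 1)) (Fin (n + 1)) ℝ) (x : Fin n → ℝ) :
    x ⬝ᵥ peel M *ᵥ x
      = x ⬝ᵥ M.submatrix Fin.succ Fin.succ *ᵥ x + (firstCross M ⬝ᵥ x) ^ 2 / 2 := by
  simp only [peel, add_mulVec, dotProduct_add, smul_mulVec, dotProduct_smul, vecMulVec_mulVec]
  simp only [dotProduct_comm x, MulOpposite.smul_eq_mul_unop, MulOpposite.unop_op, smul_eq_mul]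
  ring

lemma sum_exp_quadForm_succ_le (M : Matrix (Fin (n + 1)) (Fin (n + 1)) ℝ) :
    ∑ v : Fin (n + 1) → Bool, exp ((boolSign ∘ v) ⬝ᵥ M *ᵥ (boolSign ∘ v))
      ≤ 2 * exp (M 0 0)
        * ∑ w : Fin n → Bool, exp ((boolSign ∘ w) ⬝ᵥ peel M *ᵥ (boolSign ∘ w)) := by
  rw [← (Fin.consEquiv fun _ => Bool).sum_comp, Fintype.sum_prod_type, sum_comm, mul_sum]
  refine sum_le_sum fun w _ => ?_
  simp only [Fin.consEquiv, Equiv.coe_fn_mk, Fin.comp_cons, dotProduct_mulVec_cons,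
    Fintype.sum_bool, boolSign_true, boolSign_false, dotProduct_peel_mulVec]
  set a := firstCross M ⬝ᵥ (boolSign ∘ w)
  set q := (boolSign ∘ w) ⬝ᵥ M.submatrix Fin.succ Fin.succ *ᵥ (boolSign ∘ w)
  calc _ = exp (M 0 0 + q) * (exp a + exp (-a)) := by
        rw [mul_add, ← exp_add, ← exp_add]; ring_nf
    _ ≤ exp (M 0 0 + q) * (2 * exp (a ^ 2 / 2)) := by gcongr; exact exp_add_exp_neg_le a
    _ = _ := by rw [exp_add, exp_add]; ring

lemma offDiagSq_succ (M : Matrix (Fin (n + 1)) (Fin (n + 1)) ℝ) :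
    offDiagSq M = ∑ j : Fin n, (M 0 j.succ ^ 2 + M j.succ 0 ^ 2)
      + offDiagSq (M.submatrix Fin.succ Fin.succ) := by
  simp only [offDiagSq, Fin.sum_univ_succ, submatrix_apply, Fin.succ_inj, Fin.succ_ne_zero,
    (Fin.succ_ne_zero _).symm, if_true, if_false, sum_add_distrib]
  ring

lemma trace_peel (M : Matrix (Fin (n + 1)) (Fin (n + 1)) ℝ) :
    (peel M).trace
      = (M.submatrix Fin.succ Fin.succ).trace + firstCross M ⬝ᵥ firstCross M / 2 := by
  rw [peel, trace_add, trace_smul, trace_vecMulVec, smul_eq_mul]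
  ring

lemma offDiagSq_peel_add_le (M : Matrix (Fin (n + 1)) (Fin (n + 1)) ℝ)
    (hM : offDiagSq M ≤ 1 / 64) :
    offDiagSq (peel M) + firstCross M ⬝ᵥ firstCross M / 4 ≤ offDiagSq M := by
  set c := firstCross M
  set T := c ⬝ᵥ c
  set D := ∑ j : Fin n, (M 0 j.succ ^ 2 + M j.succ 0 ^ 2)
  set Q := offDiagSq (M.submatrix Fin.succ Fin.succ)
  set R := offDiagSq ((1 / 2 : ℝ) • vecMulVec c c) with hRdef
  have hT : 0 ≤ T := sum_nonneg fun _ _ => mul_self_nonneg _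
  have hcross : T / 2 ≤ D := by
    simp only [T, c, firstCross, dotProduct, sum_div]
    exact sum_le_sum fun j _ => by nlinarith [sq_nonneg (M 0 j.succ - M j.succ 0)]
  have hsplit : offDiagSq M = D + Q := offDiagSq_succ M
  have hR : R ≤ (T / 2) ^ 2 := by
    rw [hRdef, offDiagSq_smul]
    calc _ ≤ (1 / 2 : ℝ) ^ 2 * ∑ i, ∑ j, vecMulVec c c i j ^ 2 := by
          gcongr; exact offDiagSq_le_sum_sq _
      _ = (T / 2) ^ 2 := by
          simp only [vecMulVec_apply, mul_pow, ← mul_sum, ← sum_mul, T, dotProduct, ← sq]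
          ring
  have hsqrtR : √R ≤ T / 2 := (Real.sqrt_le_sqrt hR).trans_eq (Real.sqrt_sq (by positivity))
  have hQ : √Q ^ 2 = Q := Real.sq_sqrt (offDiagSq_nonneg _)
  have hD : 0 ≤ D := sum_nonneg fun _ _ => by positivity
  have hsqrtQ : √Q ≤ 1 / 8 := by nlinarith [Real.sqrt_nonneg Q]
  have hadd : offDiagSq (peel M) ≤ (√Q + √R) ^ 2 := offDiagSq_add_le _ _
  nlinarith [Real.sqrt_nonneg Q, Real.sqrt_nonneg R]

end Peel

theorem sum_exp_quadForm_le :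
    ∀ {n : ℕ} (M : Matrix (Fin n) (Fin n) ℝ), offDiagSq M ≤ 1 / 64 →
    ∑ v : Fin n → Bool, exp ((boolSign ∘ v) ⬝ᵥ M *ᵥ (boolSign ∘ v))
      ≤ 2 ^ n * exp (M.trace + 2 * offDiagSq M)
  | 0, M, _ => by simp [offDiagSq, Matrix.trace]
  | n + 1, M, hM => by
    have hpeel := offDiagSq_peel_add_le M hM
    have hT : 0 ≤ firstCross M ⬝ᵥ firstCross M := sum_nonneg fun _ _ => mul_self_nonneg _
    have ih := sum_exp_quadForm_le (peel M) (by linarith)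
    calc _ ≤ 2 * exp (M 0 0)
            * ∑ w : Fin n → Bool, exp ((boolSign ∘ w) ⬝ᵥ peel M *ᵥ (boolSign ∘ w)) :=
          sum_exp_quadForm_succ_le M
      _ ≤ 2 * exp (M 0 0) * (2 ^ n * exp ((peel M).trace + 2 * offDiagSq (peel M))) := by
          gcongr
      _ = 2 ^ (n + 1) * exp (M 0 0 + (peel M).trace + 2 * offDiagSq (peel M)) := by
          rw [pow_succ, add_assoc (M 0 0), exp_add (M 0 0)]; ring
      _ ≤ 2 ^ (n + 1) * exp (M.trace + 2 * offDiagSq M) := by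
          rw [← trace_submatrix_succ M, trace_peel]
          gcongr _ * exp ?_
          linarith

lemma sum_exp_quadForm_sub_trace_le {n : ℕ} (M : Matrix (Fin n) (Fin n) ℝ)
    (hM : offDiagSq M ≤ 1 / 64) :
    ∑ v : Fin n → Bool, exp ((boolSign ∘ v) ⬝ᵥ M *ᵥ (boolSign ∘ v) - M.trace)
      ≤ 2 ^ n * exp (2 * offDiagSq M) := by
  simp only [exp_sub, ← sum_div]
  rw [div_le_iff₀ (exp_pos _), mul_assoc, ← exp_add, add_comm]
  exact sum_exp_quadForm_le M hM

lemma hutch_eq_sum {d l : ℕ} (A : Matrix (Fin d) (Fin d) ℝ) (g : Fin d → Fin l → ℝ) :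
    hutch A g = (1 / l : ℝ) * ∑ k, (fun i => g i k) ⬝ᵥ A *ᵥ (fun i => g i k) := by
  rw [hutch]
  congr 1
  refine sum_congr rfl fun k _ => ?_
  simp only [Matrix.diag, mul_apply, transpose_apply, of_apply, dotProduct, mulVec, sum_mul,
    mul_sum]
  rw [sum_comm]
  exact sum_congr rfl fun i _ => sum_congr rfl fun j _ => by ring

lemma sum_prod_columns {α γ : Type*} [Fintype α] [DecidableEq α] [Fintype γ] {l : ℕ}
    (F : (α → γ) → ℝ) :
    ∑ v : α → Fin l → γ, ∏ k, F (fun i => v i k) = (∑ u, F u) ^ l := by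
  rw [Fintype.sum_pow]
  exact (Equiv.piComm fun (_ : α) (_ : Fin l) => γ).sum_comp fun p => ∏ k, F (p k)

theorem sum_exp_mul_hutch_sub_trace_le {d l : ℕ} (hl : l ≠ 0) (A : Matrix (Fin d) (Fin d) ℝ)
    (t : ℝ) (ht : (t / l) ^ 2 * offDiagSq A ≤ 1 / 64) :
    ∑ v : Fin d → Fin l → Bool, exp (t * (hutch A (signMatrix v) - A.trace))
      ≤ 2 ^ (d * l) * exp (2 * t ^ 2 * offDiagSq A / l) := by
  set M := (t / l : ℝ) • A
  have hcolumns : ∀ g : Fin d → Fin l → ℝ, t * (hutch A g - A.trace)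
      = ∑ k, ((fun i => g i k) ⬝ᵥ M *ᵥ (fun i => g i k) - M.trace) := by
    intro g
    simp only [M, hutch_eq_sum, smul_mulVec, dotProduct_smul, trace_smul, smul_eq_mul,
      sum_sub_distrib, ← mul_sum, sum_const, card_univ, Fintype.card_fin, nsmul_eq_mul]
    field_simp
  simp only [hcolumns, exp_sum]
  calc _ = (∑ u : Fin d → Bool, exp ((boolSign ∘ u) ⬝ᵥ M *ᵥ (boolSign ∘ u) - M.trace)) ^ l :=
        sum_prod_columns _
    _ ≤ (2 ^ d * exp (2 * offDiagSq M)) ^ l := by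
        gcongr
        exact sum_exp_quadForm_sub_trace_le M (by rwa [offDiagSq_smul])
    _ = _ := by
        rw [mul_pow, ← pow_mul, ← exp_nat_mul, offDiagSq_smul]
        field_simp

lemma frobNorm_sq {m n : ℕ} (A : Matrix (Fin m) (Fin n) ℝ) :
    frobNorm A ^ 2 = ∑ i, ∑ j, A i j ^ 2 :=
  Real.sq_sqrt (sum_nonneg fun _ _ => sum_nonneg fun _ _ => sq_nonneg _)

lemma frobNorm_pos {m n : ℕ} {A : Matrix (Fin m) (Fin n) ℝ} (hA : A ≠ 0) : 0 < frobNorm A := by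
  let := @Matrix.frobeniusNormedAddCommGroup (Fin m) (Fin n) ℝ _ _ _
  have hnorm : frobNorm A = ‖A‖ := by
    simp [frobNorm, frobenius_norm_def, Real.sqrt_eq_rpow]
  exact hnorm ▸ norm_pos_iff.2 hA

lemma card_le_abs_mul_exp_le {ι : Type*} [Fintype ι] (X : ι → ℝ) (t : ℝ) {s : ℝ} (hs : 0 ≤ s) :
    #{v | t ≤ |X v|} * exp (s * t) ≤ ∑ v, exp (s * X v) + ∑ v, exp (-s * X v) := by
  rw [← sum_add_distrib, ← nsmul_eq_mul, ← sum_const]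
  refine (sum_le_sum fun v hv => ?_).trans
    (sum_le_sum_of_subset_of_nonneg (filter_subset _ _) fun _ _ _ => by positivity)
  have htv := (mem_filter.1 hv).2
  rcases abs_cases (X v) with ⟨h, _⟩ | ⟨h, _⟩
  · have : exp (s * t) ≤ exp (s * X v) := exp_le_exp.2 (by nlinarith)
    linarith [exp_pos (-s * X v)]
  · have : exp (s * t) ≤ exp (-s * X v) := exp_le_exp.2 (by nlinarith)
    linarith [exp_pos (s * X v)]

theorem card_le_abs_hutch_sub_trace_le {d l : ℕ} {A : Matrix (Fin d) (Fin d) ℝ} (hA : A ≠ 0)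
    {L : ℝ} (hL : 0 < L) (hl : 64 * L ≤ l) :
    (#{v : Fin d → Fin l → Bool |
        4 * √(L / l) * frobNorm A ≤ |hutch A (signMatrix v) - A.trace|} : ℝ)
      ≤ 2 * exp (-(2 * L)) * 2 ^ (d * l) := by
  set F := frobNorm A
  have hF : 0 < F := frobNorm_pos hA
  have hl0 : (0 : ℝ) < l := by linarith
  have hoff : offDiagSq A ≤ F ^ 2 := (offDiagSq_le_sum_sq A).trans_eq (frobNorm_sq A).symm
  -- the Chernoff parameter `s` balances `s * t = 4 L` against `s² F² = L l`
  set s := √(L * l) / F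
  have hs : 0 ≤ s := by positivity
  have hsF' : s * F = √(L * l) := div_mul_cancel₀ _ hF.ne'
  have hsF : s ^ 2 * F ^ 2 = L * l := by
    rw [← mul_pow, hsF', Real.sq_sqrt (by positivity)]
  have hst : s * (4 * √(L / l) * F) = 4 * L := by
    rw [show s * (4 * √(L / l) * F) = 4 * (s * F * √(L / l)) by ring, hsF',
      ← Real.sqrt_mul (by positivity), show L * l * (L / l) = L ^ 2 by field_simp,
      Real.sqrt_sq hL.le]
  have hmgf : ∀ s' : ℝ, s' ^ 2 = s ^ 2 →
      ∑ v : Fin d → Fin l → Bool, exp (s' * (hutch A (signMatrix v) - A.trace))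
        ≤ 2 ^ (d * l) * exp (2 * L) := by
    intro s' hs'
    have hvar : s' ^ 2 * offDiagSq A ≤ L * l := by
      rw [hs', ← hsF]; exact mul_le_mul_of_nonneg_left hoff (sq_nonneg s)
    calc _ ≤ 2 ^ (d * l) * exp (2 * s' ^ 2 * offDiagSq A / l) := by
          refine sum_exp_mul_hutch_sub_trace_le (by exact_mod_cast hl0.ne') A s' ?_
          rw [div_pow, div_mul_eq_mul_div, div_le_iff₀ (by positivity)]
          nlinarith
      _ ≤ 2 ^ (d * l) * exp (2 * L) := by
          gcongr
          rw [div_le_iff₀ hl0]; linarith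
  have hchernoff := card_le_abs_mul_exp_le (fun v : Fin d → Fin l → Bool =>
    hutch A (signMatrix v) - A.trace) (4 * √(L / l) * F) hs
  rw [hst] at hchernoff
  have h1 := hmgf s rfl
  have h2 := hmgf (-s) (neg_sq s)
  rw [← le_div_iff₀ (exp_pos _)] at hchernoff
  calc _ ≤ _ := hchernoff
    _ ≤ (2 ^ (d * l) * exp (2 * L) + 2 ^ (d * l) * exp (2 * L)) / exp (4 * L) := by gcongr
    _ = 2 * exp (-(2 * L)) * 2 ^ (d * l) := by
        rw [show 4 * L = 2 * L + 2 * L by ring, exp_add, Real.exp_neg]; field_simp; ring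

theorem card_abs_hutch_sub_trace_le_ge {d l : ℕ} {A : Matrix (Fin d) (Fin d) ℝ} (hA : A ≠ 0)
    {L : ℝ} (hL : 0 < L) (hl : 64 * L ≤ l) :
    (1 - 2 * exp (-(2 * L))) * 2 ^ (d * l)
      ≤ #{v : Fin d → Fin l → Bool |
          |hutch A (signMatrix v) - A.trace| ≤ 4 * √(L / l) * frobNorm A} := by
  have htail := card_le_abs_hutch_sub_trace_le hA hL hl
  set B := 4 * √(L / l) * frobNorm A
  set X := fun v : Fin d → Fin l → Bool => hutch A (signMatrix v) - A.trace
  have hsplit := card_filter_add_card_filter_not (s := univ) fun v => |X v| ≤ B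
  have hbad : #{v | ¬ |X v| ≤ B} ≤ #{v | B ≤ |X v|} :=
    card_le_card <| monotone_filter_right _ fun _ _ h => (not_le.1 h).le
  rw [card_univ, Fintype.card_fun, Fintype.card_fun, Fintype.card_fin, Fintype.card_fin,
    Fintype.card_bool, ← pow_mul, mul_comm l] at hsplit
  have hsplit' : (#{v | |X v| ≤ B} : ℝ) + #{v | ¬ |X v| ≤ B} = 2 ^ (d * l) := by
    exact_mod_cast hsplit
  have hbad' : (#{v | ¬ |X v| ≤ B} : ℝ) ≤ #{v | B ≤ |X v|} := by exact_mod_cast hbad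
  linarith

lemma rademacher_singleton_boolSign (b : Bool) : rademacher {boolSign b} = 2⁻¹ := by
  cases b <;> norm_num [rademacher, Measure.dirac_apply]

lemma radMeasure_singleton_signMatrix {d l : ℕ} (v : Fin d → Fin l → Bool) :
    radMeasure d l {signMatrix v} = (2 ^ (d * l))⁻¹ := by
  simp only [radMeasure, Measure.pi_singleton, signMatrix, rademacher_singleton_boolSign,
    prod_const, card_univ, Fintype.card_fin, ← pow_mul, ENNReal.inv_pow, mul_comm l]

lemma ofReal_card_div_le_radMeasure {d l : ℕ} (s : Set (Fin d → Fin l → ℝ))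
    [DecidablePred (· ∈ s)] :
    ENNReal.ofReal (#{v | signMatrix v ∈ s} / 2 ^ (d * l)) ≤ radMeasure d l s := by
  calc ENNReal.ofReal (#{v | signMatrix v ∈ s} / 2 ^ (d * l))
      = ∑ v ∈ {v | signMatrix v ∈ s}, radMeasure d l {signMatrix v} := by
        rw [sum_congr rfl fun v _ => radMeasure_singleton_signMatrix v, sum_const, nsmul_eq_mul,
          ENNReal.ofReal_div_of_pos (by positivity), ENNReal.ofReal_natCast, ENNReal.div_eq_inv_mul]
        norm_num [mul_comm]
    _ = radMeasure d l (({v | signMatrix v ∈ s} : Finset _).image signMatrix : Set _) := by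
        rw [← sum_measure_singleton, sum_image fun _ _ _ _ h => signMatrix_injective h]
    _ ≤ radMeasure d l s := measure_mono <| by simp [Set.subset_def]

end Hutchinson

open Hutchinson in
theorem stmt4 : ∃ c C : ℝ, 0 < c ∧ 0 < C ∧
    ∀ (d : ℕ) (A : Matrix (Fin d) (Fin d) ℝ) (δ : ℝ) (ℓ : ℕ),
      1 ≤ d → 0 < δ → δ ≤ 1 / 2 → c * Real.log (1 / δ) ≤ (ℓ : ℝ) →
      ENNReal.ofReal (1 - δ) ≤
        radMeasure d ℓ
          {g | |hutch A g - A.trace| ≤ C * Real.sqrt (Real.log (1 / δ) / ℓ) * frobNorm A} := by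
  refine ⟨64, 4, by norm_num, by norm_num, fun d A δ l _ hδ hδ' hl => ?_⟩
  rcases eq_or_ne A 0 with rfl | hA
  · simp [hutch, frobNorm, radMeasure, hδ.le]
  have hL : 0 < Real.log (1 / δ) := Real.log_pos (by rw [lt_div_iff₀ hδ]; linarith)
  have hδsq : exp (-(2 * Real.log (1 / δ))) = δ ^ 2 := by
    rw [← Real.log_rpow (by positivity), Real.exp_neg, Real.exp_log (by positivity)]
    norm_num
  refine le_trans (ENNReal.ofReal_le_ofReal ?_) (ofReal_card_div_le_radMeasure _)
  rw [le_div_iff₀ (by positivity)]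
  refine le_trans ?_ (card_abs_hutch_sub_trace_le_ge hA hL hl)
  rw [hδsq]
  gcongr
  nlinarith
end

section
/- For all positive integers α and j with 10·j ≤ α, it holds that (Γ(2α)/(2·Γ(α)²))·4^{1−α}·∫_{−1}^{1} (1 − x²)^{α−1−j} dx ≤ 6/5, where Γ denotes the Gamma function. -/
/-! Substituting `x = cos θ` turns `∫_{-1}^{1} (1 - x²)^n dx` into the Wallis integral
`W n = ∫_0^π sin^(2n+1)`, and `W (n+1) = (2n+2)/(2n+3) · W n`. Hence the Gamma factor is exactly
`1 / W (α-1)`, and with `n = α-1-j` the left-hand side is `W n / W (n+j)`, a product of `j` factors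
each at most `1 + 1/(2n+2) ≤ 1 + 1/(18j)`. It is therefore at most `e^(1/18) < 6/5`. -/

open Real MeasureTheory intervalIntegral

theorem integral_Icc_one_sub_sq_pow (n : ℕ) :
    ∫ x in Set.Icc (-1 : ℝ) 1, (1 - x ^ 2) ^ n = ∫ x in 0..π, sin x ^ (2 * n + 1) := by
  have hsubst : ∫ x in (0 : ℝ)..π, (-sin x) • ((fun y => (1 - y ^ 2) ^ n) ∘ cos) x
      = ∫ y in (1 : ℝ)..(-1), (1 - y ^ 2) ^ n := by
    rw [integral_deriv_smul_comp (fun x _ => hasDerivAt_cos x) (by fun_prop) (by fun_prop),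
      cos_zero, cos_pi]
  rw [integral_Icc_eq_integral_Ioc, ← integral_of_le (by norm_num), integral_symm, ← hsubst,
    ← intervalIntegral.integral_neg]
  refine integral_congr fun x _ => ?_
  simp only [Function.comp, smul_eq_mul, neg_mul, neg_neg, ← sin_sq]
  ring

theorem integral_sin_pow_odd_succ (n : ℕ) :
    ∫ x in 0..π, sin x ^ (2 * (n + 1) + 1)
      = (2 * n + 2) / (2 * n + 3) * ∫ x in 0..π, sin x ^ (2 * n + 1) := by
  rw [show 2 * (n + 1) + 1 = 2 * n + 1 + 2 by ring, integral_sin_pow]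
  simp only [sin_zero, sin_pi, zero_pow (Nat.succ_ne_zero _), zero_mul, sub_zero, zero_div,
    zero_add]
  push_cast
  ring

theorem factorial_mul_integral_sin_pow_odd (m : ℕ) :
    ((2 * m + 1).factorial : ℝ) * ∫ x in 0..π, sin x ^ (2 * m + 1)
      = 2 * 4 ^ m * (m.factorial : ℝ) ^ 2 := by
  induction m with
  | zero => norm_num
  | succ m ih =>
    rw [integral_sin_pow_odd_succ, show 2 * (m + 1) + 1 = 2 * m + 1 + 1 + 1 by ring,
      Nat.factorial_succ (2 * m + 1 + 1), Nat.factorial_succ (2 * m + 1), Nat.factorial_succ m]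
    push_cast
    field_simp
    linear_combination (4 * ((m : ℝ) + 1) ^ 2 + 2 * ((m : ℝ) + 1)) * ih

theorem Gamma_div_mul_integral_one_sub_sq_pow_eq_one (α : ℕ) (hα : 1 ≤ α) :
    Gamma (2 * (α : ℝ)) / (2 * Gamma (α : ℝ) ^ 2) * (4 : ℝ) ^ ((1 : ℤ) - α)
      * ∫ x in Set.Icc (-1 : ℝ) 1, (1 - x ^ 2) ^ (α - 1) = 1 := by
  obtain ⟨m, rfl⟩ := Nat.exists_eq_add_of_le' hα
  have hΓ : Gamma ((m + 1 : ℕ) : ℝ) = m.factorial := by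
    rw [Nat.cast_succ, Gamma_nat_eq_factorial]
  have hΓ₂ : Gamma (2 * ((m + 1 : ℕ) : ℝ)) = (2 * m + 1).factorial := by
    rw [← Gamma_nat_eq_factorial]; push_cast; congr 1; ring
  have h4 : (4 : ℝ) ^ ((1 : ℤ) - (m + 1 : ℕ)) = ((4 : ℝ) ^ m)⁻¹ := by
    rw [← zpow_natCast, ← zpow_neg]; congr 1; push_cast; ring
  rw [hΓ, hΓ₂, h4, Nat.add_sub_cancel, integral_Icc_one_sub_sq_pow]
  field_simp
  linear_combination factorial_mul_integral_sin_pow_odd m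

theorem integral_sin_pow_odd_le_pow_mul (n j : ℕ) :
    ∫ x in 0..π, sin x ^ (2 * n + 1)
      ≤ (1 + 1 / (2 * n + 2)) ^ j * ∫ x in 0..π, sin x ^ (2 * (n + j) + 1) := by
  induction j with
  | zero => simp
  | succ j ih =>
    have hstep : ∫ x in 0..π, sin x ^ (2 * (n + j) + 1)
        ≤ (1 + 1 / (2 * n + 2)) * ∫ x in 0..π, sin x ^ (2 * (n + j + 1) + 1) := by
      have hnj : (n : ℝ) ≤ (n + j : ℕ) := by exact_mod_cast n.le_add_right j
      rw [integral_sin_pow_odd_succ, ← mul_assoc]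
      refine le_mul_of_one_le_left (integral_sin_pow_pos _).le ?_
      rw [one_add_div (by positivity), div_mul_div_comm, one_le_div (by positivity)]
      nlinarith
    calc _ ≤ _ := ih
      _ ≤ _ := mul_le_mul_of_nonneg_left hstep (by positivity)
      _ = _ := by rw [← add_assoc, pow_succ, mul_assoc]

theorem one_add_one_div_pow_le_six_div_five (n j : ℕ) (h : 9 * j ≤ n + 1) :
    (1 + 1 / (2 * n + 2 : ℝ)) ^ j ≤ 6 / 5 := by
  have hj : (j : ℝ) / (2 * n + 2) ≤ 1 / 18 := by
    rw [div_le_div_iff₀ (by positivity) (by norm_num)]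
    exact_mod_cast (by omega : j * 18 ≤ 1 * (2 * n + 2))
  calc (1 + 1 / (2 * n + 2 : ℝ)) ^ j ≤ exp (1 / (2 * n + 2)) ^ j := by
        gcongr; linarith [add_one_le_exp (1 / (2 * n + 2 : ℝ))]
    _ = exp (j / (2 * n + 2)) := by rw [← exp_nat_mul, mul_one_div]
    _ ≤ exp (1 / 18) := exp_le_exp.2 hj
    _ ≤ 1 / (1 - 1 / 18) := exp_bound_div_one_sub_of_interval (by norm_num) (by norm_num)
    _ ≤ 6 / 5 := by norm_num

theorem stmt14_general (α j : ℕ) (hα : 1 ≤ α) (h : 10 * j ≤ α) :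
    (Real.Gamma (2 * (α : ℝ)) / (2 * (Real.Gamma (α : ℝ)) ^ 2)) *
        (4 : ℝ) ^ ((1 : ℤ) - (α : ℤ)) *
        (∫ x in Set.Icc (-1 : ℝ) 1, (1 - x ^ 2) ^ (α - 1 - j)) ≤ 6 / 5 := by
  have hnorm := Gamma_div_mul_integral_one_sub_sq_pow_eq_one α hα
  set C := Gamma (2 * (α : ℝ)) / (2 * Gamma (α : ℝ) ^ 2) * (4 : ℝ) ^ ((1 : ℤ) - α)
  have hC : 0 ≤ C := by positivity
  obtain ⟨n, hn⟩ : ∃ n, α - 1 = n + j := ⟨α - 1 - j, by omega⟩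
  rw [hn, integral_Icc_one_sub_sq_pow] at hnorm
  rw [hn, Nat.add_sub_cancel, integral_Icc_one_sub_sq_pow]
  calc C * ∫ x in 0..π, sin x ^ (2 * n + 1)
      ≤ C * ((1 + 1 / (2 * n + 2)) ^ j * ∫ x in 0..π, sin x ^ (2 * (n + j) + 1)) :=
        mul_le_mul_of_nonneg_left (integral_sin_pow_odd_le_pow_mul n j) hC
    _ = (1 + 1 / (2 * n + 2)) ^ j := by rw [mul_left_comm, hnorm, mul_one]
    _ ≤ 6 / 5 := one_add_one_div_pow_le_six_div_five n j (by omega)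

theorem stmt14 (α j : ℕ) (hα : 1 ≤ α) (hj : 1 ≤ j) (h : 10 * j ≤ α) :
    (Real.Gamma (2 * (α : ℝ)) / (2 * (Real.Gamma (α : ℝ)) ^ 2)) *
        (4 : ℝ) ^ ((1 : ℤ) - (α : ℤ)) *
        (∫ x in Set.Icc (-1 : ℝ) 1, (1 - x ^ 2) ^ (α - 1 - j)) ≤ 6 / 5 :=
  stmt14_general α j hα h
end

section
/- For all positive integers β ≤ α, (α · C(2α, α)) / (β · C(2β, β)) ≤ (2/√π) · 4^{α−β} · √(α/β), where C(2z, z) denotes the central binomial coefficient (2z choose z). -/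
open Finset Real

noncomputable def Pf (n : ℕ) : ℝ := ∏ i ∈ range n, (2 * (i : ℝ) + 1) / (2 * i + 2)

noncomputable def Qf (n : ℕ) : ℝ := ∏ i ∈ range n, (2 * (i : ℝ) + 2) / (2 * i + 3)

lemma Pf_pos (n : ℕ) : 0 < Pf n := by
  refine Finset.prod_pos fun i _ => div_pos ?_ ?_ <;> positivity

lemma Qf_pos (n : ℕ) : 0 < Qf n := by
  refine Finset.prod_pos fun i _ => div_pos ?_ ?_ <;> positivity

lemma PQ (n : ℕ) : Pf n * Qf n = 1 / (2 * (n : ℝ) + 1) := by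
  induction n with
  | zero => simp [Pf, Qf]
  | succ k ih =>
    have h1 : Pf (k+1) = Pf k * ((2*(k:ℝ)+1)/(2*k+2)) := by
      unfold Pf; rw [prod_range_succ]
    have h2 : Qf (k+1) = Qf k * ((2*(k:ℝ)+2)/(2*k+3)) := by
      unfold Qf; rw [prod_range_succ]
    rw [h1, h2, mul_mul_mul_comm, ih]
    push_cast
    rw [div_mul_div_comm, div_mul_div_comm, div_eq_div_iff (by positivity) (by positivity)]
    ring

lemma Pf_succ (n : ℕ) : Pf (n + 1) = Pf n * ((2 * (n:ℝ) + 1) / (2 * n + 2)) := by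
  unfold Pf; rw [prod_range_succ]

lemma central_eq (n : ℕ) : ((Nat.choose (2 * n) n : ℕ) : ℝ) = 4 ^ n * Pf n := by
  induction n with
  | zero => simp [Pf]
  | succ k ih =>
    have h := Nat.succ_mul_centralBinom_succ k
    have h' : ((k:ℝ) + 1) * (Nat.choose (2 * (k+1)) (k+1) : ℝ)
        = 2 * (2 * k + 1) * (Nat.choose (2 * k) k : ℝ) := by
      have := congrArg (fun m : ℕ => (m : ℝ)) h
      simp only [Nat.centralBinom] at this
      push_cast at this
      push_cast
      linarith
    have hk1 : ((k:ℝ) + 1) ≠ 0 := by positivity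
    have : (Nat.choose (2 * (k+1)) (k+1) : ℝ)
        = 2 * (2 * k + 1) * (Nat.choose (2 * k) k : ℝ) / (k + 1) := by
      field_simp at h' ⊢; linarith
    rw [this, ih, Pf_succ]
    field_simp
    ring

-- Wallis upper bound : π * (n+1) * Pf (n+1) ^ 2 ≤ 1
lemma upper (n : ℕ) : Real.pi * (n + 1 : ℝ) * Pf (n + 1) ^ 2 ≤ 1 := by
  have h := integral_sin_pow_succ_le (n := 2 * n + 1)
  rw [show 2 * n + 1 + 1 = 2 * (n + 1) by ring] at h
  rw [integral_sin_pow_even, integral_sin_pow_odd] at h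
  -- h : π * Pf (n+1) ≤ 2 * Qf n
  have h2 : Real.pi * Pf (n + 1) ≤ 2 * Qf n := h
  have hP := Pf_pos (n + 1)
  have key : Pf (n + 1) * Qf n = 1 / (2 * (n:ℝ) + 2) := by
    rw [Pf_succ, mul_right_comm, PQ]
    have : (2 * (n:ℝ) + 1) ≠ 0 := by positivity
    field_simp
  have h3 : Real.pi * Pf (n + 1) * Pf (n + 1) ≤ 2 * (Qf n * Pf (n + 1)) := by
    nlinarith [Pf_pos (n+1)]
  rw [mul_comm (Qf n), key] at h3
  have h4 : Real.pi * Pf (n + 1) ^ 2 ≤ 1 / ((n:ℝ) + 1) := by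
    have hne : (2 * (n:ℝ) + 2) ≠ 0 := by positivity
    rw [sq]
    calc Real.pi * (Pf (n+1) * Pf (n+1)) = Real.pi * Pf (n+1) * Pf (n+1) := by ring
    _ ≤ 2 * (1 / (2 * (n:ℝ) + 2)) := h3
    _ = 1 / ((n:ℝ) + 1) := by field_simp
  have hn1 : (0:ℝ) < (n:ℝ) + 1 := by positivity
  calc Real.pi * ((n:ℝ) + 1) * Pf (n + 1) ^ 2
      = ((n:ℝ) + 1) * (Real.pi * Pf (n + 1) ^ 2) := by ring
    _ ≤ ((n:ℝ) + 1) * (1 / ((n:ℝ) + 1)) := by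
        exact mul_le_mul_of_nonneg_left h4 hn1.le
    _ = 1 := by field_simp

lemma upperP {n : ℕ} (hn : 1 ≤ n) : Pf n ^ 2 ≤ 1 / (Real.pi * n) := by
  obtain ⟨m, rfl⟩ := Nat.exists_eq_add_of_le hn
  have h := upper m
  have hpos : (0:ℝ) < Real.pi * (1 + m : ℕ) := by
    have := Real.pi_pos; push_cast; positivity
  rw [le_div_iff₀ hpos]
  calc Pf (1 + m) ^ 2 * (Real.pi * ((1 + m : ℕ) : ℝ))
      = Real.pi * ((m:ℝ) + 1) * Pf (m + 1) ^ 2 := by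
        rw [show 1 + m = m + 1 by ring]; push_cast; ring
    _ ≤ 1 := h

-- Wallis lower bound : 2 / (2n+1) ≤ π * Pf n ^ 2
lemma lower (n : ℕ) : 2 / (2 * (n:ℝ) + 1) ≤ Real.pi * Pf n ^ 2 := by
  have h := integral_sin_pow_succ_le (n := 2 * n)
  rw [integral_sin_pow_even, integral_sin_pow_odd] at h
  -- h : 2 * Qf n ≤ π * Pf n
  have h2 : 2 * Qf n ≤ Real.pi * Pf n := h
  have hP := Pf_pos n
  have h3 : 2 * (Qf n * Pf n) ≤ Real.pi * Pf n * Pf n := by nlinarith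
  rw [mul_comm (Qf n), PQ] at h3
  calc 2 / (2 * (n:ℝ) + 1) = 2 * (1 / (2 * (n:ℝ) + 1)) := by ring
    _ ≤ Real.pi * Pf n * Pf n := h3
    _ = Real.pi * Pf n ^ 2 := by ring

lemma lowerP {n : ℕ} (hn : 1 ≤ n) : 1 / (4 * (n:ℝ)) ≤ Pf n ^ 2 := by
  rcases eq_or_lt_of_le hn with h1 | h2
  · subst n; · simp [Pf, prod_range_succ]; norm_num
  · have hn2 : 2 ≤ n := h2
    have h := lower n
    have hpi := Real.pi_lt_d2
    have hpi0 := Real.pi_pos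
    have hnn : (2:ℝ) ≤ (n:ℝ) := by exact_mod_cast hn2
    -- 1/(4n) ≤ 2/(π(2n+1)) since π(2n+1) ≤ 8n
    have key : 1 / (4 * (n:ℝ)) ≤ 2 / (Real.pi * (2 * n + 1)) := by
      rw [div_le_div_iff₀ (by positivity) (by positivity)]
      nlinarith
    have h' : 2 / (Real.pi * (2 * (n:ℝ) + 1)) ≤ Pf n ^ 2 := by
      rw [div_le_iff₀ (by positivity)]
      rw [div_le_iff₀ (by positivity)] at h
      nlinarith
    linarith

theorem stmt15 (α β : ℕ) (hβ : 1 ≤ β) (hβα : β ≤ α) :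
    ((α : ℝ) * (Nat.choose (2 * α) α)) / ((β : ℝ) * (Nat.choose (2 * β) β)) ≤
      (2 / Real.sqrt Real.pi) * (4 : ℝ) ^ (α - β) * Real.sqrt ((α : ℝ) / (β : ℝ)) := by
  have hα : 1 ≤ α := le_trans hβ hβα
  have hαR : (1:ℝ) ≤ (α:ℝ) := by exact_mod_cast hα
  have hβR : (1:ℝ) ≤ (β:ℝ) := by exact_mod_cast hβ
  have hα0 : (0:ℝ) < (α:ℝ) := by linarith
  have hβ0 : (0:ℝ) < (β:ℝ) := by linarith
  have hpi := Real.pi_pos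
  have hPα := Pf_pos α
  have hPβ := Pf_pos β
  rw [central_eq α, central_eq β]
  have hpow : (4:ℝ) ^ (α - β) = 4 ^ α / 4 ^ β := pow_sub₀ (4:ℝ) (by norm_num) hβα
  rw [hpow]
  set L : ℝ := (α:ℝ) * (4 ^ α * Pf α) / ((β:ℝ) * (4 ^ β * Pf β)) with hL
  set R : ℝ := 2 / Real.sqrt Real.pi * (4 ^ α / 4 ^ β) * Real.sqrt ((α:ℝ) / β) with hR
  have hL0 : 0 ≤ L := by positivity
  have hR0 : 0 ≤ R := by positivity
  have hsq : L ^ 2 ≤ R ^ 2 := by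
    have hRsq : R ^ 2 = 4 / Real.pi * ((4:ℝ) ^ α / 4 ^ β) ^ 2 * ((α:ℝ) / β) := by
      rw [hR]
      rw [mul_pow, mul_pow, div_pow, Real.sq_sqrt (by positivity : (0:ℝ) ≤ (α:ℝ)/β),
        Real.sq_sqrt hpi.le]
      norm_num
    have hLsq : L ^ 2 = ((α:ℝ)^2 * Pf α ^ 2) * ((4:ℝ) ^ α / 4 ^ β) ^ 2
        / ((β:ℝ)^2 * Pf β ^ 2) := by
      rw [hL]; field_simp
    rw [hLsq, hRsq]
    have hup : (α:ℝ)^2 * Pf α ^ 2 ≤ (α:ℝ) / Real.pi := by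
      have := upperP hα
      have h1 : (α:ℝ)^2 * Pf α ^ 2 ≤ (α:ℝ)^2 * (1 / (Real.pi * α)) := by
        exact mul_le_mul_of_nonneg_left this (by positivity)
      calc (α:ℝ)^2 * Pf α ^ 2 ≤ (α:ℝ)^2 * (1 / (Real.pi * α)) := h1
        _ = (α:ℝ) / Real.pi := by field_simp
    have hlo : (β:ℝ) / 4 ≤ (β:ℝ)^2 * Pf β ^ 2 := by
      have := lowerP hβ
      have h1 : (β:ℝ)^2 * (1 / (4 * β)) ≤ (β:ℝ)^2 * Pf β ^ 2 :=
        mul_le_mul_of_nonneg_left this (by positivity)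
      calc (β:ℝ) / 4 = (β:ℝ)^2 * (1 / (4 * β)) := by field_simp
        _ ≤ (β:ℝ)^2 * Pf β ^ 2 := h1
    have hden : (0:ℝ) < (β:ℝ)^2 * Pf β ^ 2 := by positivity
    have hmain : ((α:ℝ)^2 * Pf α ^ 2) / ((β:ℝ)^2 * Pf β ^ 2)
        ≤ ((α:ℝ) / Real.pi) / ((β:ℝ) / 4) := by
      exact div_le_div₀ (by positivity) hup (by positivity) hlo
    have heq : ((α:ℝ) / Real.pi) / ((β:ℝ) / 4) = 4 / Real.pi * ((α:ℝ) / β) := by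
      field_simp
    have hfac : (0:ℝ) ≤ ((4:ℝ) ^ α / 4 ^ β) ^ 2 := by positivity
    calc ((α:ℝ)^2 * Pf α ^ 2) * ((4:ℝ) ^ α / 4 ^ β) ^ 2 / ((β:ℝ)^2 * Pf β ^ 2)
        = (((α:ℝ)^2 * Pf α ^ 2) / ((β:ℝ)^2 * Pf β ^ 2)) * ((4:ℝ) ^ α / 4 ^ β) ^ 2 := by
          ring
      _ ≤ (4 / Real.pi * ((α:ℝ) / β)) * ((4:ℝ) ^ α / 4 ^ β) ^ 2 := by
          refine mul_le_mul_of_nonneg_right ?_ hfac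
          rw [← heq]; exact hmain
      _ = 4 / Real.pi * ((4:ℝ) ^ α / 4 ^ β) ^ 2 * ((α:ℝ) / β) := by ring
  nlinarith [hsq, hL0, hR0]
end
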